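/- arXiv:2410.13749 — 3 statements merged into one kernel-verified Lean document; each statement's English description precedes it below -/
import Mathlib

section
/- Let k : ℝ^d × ℝ^d → ℝ be a bounded function, let x₀, x₀′ ∈ ℝ^d, let g : ℝ^d → ℝ, let x₁,…,xₙ ∈ ℝ^d, let A ⊆ ℝ^d, and let r ≥ 0 and a, b ≥ 0 with a + b = 1. Then |(1/n) Σᵢ g(xᵢ)(k(xᵢ,x₀) − k(xᵢ,x₀′)) 1_A(xᵢ)| ≤ ‖g‖_{A,L²(Pₙ)} · [ ‖k(·,x₀) − k(·,x₀′)‖_{A,∞} · Mass_A(r)^{1/2} + 2·tail_{k,A}(a·r) + 2·‖k‖_{A,L^{2,∞}} · 1{‖x₀ − x₀′‖ ≥ b·r} ]. -/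
open scoped BigOperators
open scoped Classical

private lemma my_cs (n : ℕ) (c : ℝ) (hc : 0 ≤ c) (f h : Fin n → ℝ) :
    |c * ∑ i, f i * h i| ≤
      Real.sqrt (c * ∑ i, f i ^ 2) * Real.sqrt (c * ∑ i, h i ^ 2) := by
  have h1 : (∑ i, f i * h i) ^ 2 ≤ (∑ i, f i ^ 2) * (∑ i, h i ^ 2) :=
    Finset.sum_mul_sq_le_sq_mul_sq _ _ _
  have hF : (0:ℝ) ≤ ∑ i, f i ^ 2 := Finset.sum_nonneg fun i _ => sq_nonneg _
  have hH : (0:ℝ) ≤ ∑ i, h i ^ 2 := Finset.sum_nonneg fun i _ => sq_nonneg _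
  have h2 : |∑ i, f i * h i| ≤ Real.sqrt (∑ i, f i ^ 2) * Real.sqrt (∑ i, h i ^ 2) := by
    rw [← Real.sqrt_sq_eq_abs, ← Real.sqrt_mul hF]
    exact Real.sqrt_le_sqrt h1
  calc |c * ∑ i, f i * h i| = c * |∑ i, f i * h i| := by
        rw [abs_mul, abs_of_nonneg hc]
    _ ≤ c * (Real.sqrt (∑ i, f i ^ 2) * Real.sqrt (∑ i, h i ^ 2)) :=
        mul_le_mul_of_nonneg_left h2 hc
    _ = Real.sqrt (c * ∑ i, f i ^ 2) * Real.sqrt (c * ∑ i, h i ^ 2) := by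
        rw [Real.sqrt_mul hc, Real.sqrt_mul hc]
        have hcc : Real.sqrt c * Real.sqrt c = c := Real.mul_self_sqrt hc
        rw [show Real.sqrt c * Real.sqrt (∑ i, f i ^ 2) * (Real.sqrt c * Real.sqrt (∑ i, h i ^ 2))
          = (Real.sqrt c * Real.sqrt c) * (Real.sqrt (∑ i, f i ^ 2) * Real.sqrt (∑ i, h i ^ 2))
          from by ring, hcc]

private lemma my_tri (n : ℕ) (c : ℝ) (hc : 0 ≤ c) (u v : Fin n → ℝ) :
    Real.sqrt (c * ∑ i, (u i - v i) ^ 2) ≤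
      Real.sqrt (c * ∑ i, u i ^ 2) + Real.sqrt (c * ∑ i, v i ^ 2) := by
  have hU : (0:ℝ) ≤ c * ∑ i, u i ^ 2 :=
    mul_nonneg hc (Finset.sum_nonneg fun i _ => sq_nonneg _)
  have hV : (0:ℝ) ≤ c * ∑ i, v i ^ 2 :=
    mul_nonneg hc (Finset.sum_nonneg fun i _ => sq_nonneg _)
  have hP : |∑ i, u i * v i| ≤ Real.sqrt (∑ i, u i ^ 2) * Real.sqrt (∑ i, v i ^ 2) := by
    have := my_cs n 1 zero_le_one u v
    simpa using this
  have hexp : (∑ i, (u i - v i) ^ 2)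
      = (∑ i, u i ^ 2) - 2 * (∑ i, u i * v i) + (∑ i, v i ^ 2) := by
    rw [Finset.sum_congr rfl fun i _ => show (u i - v i) ^ 2
        = u i ^ 2 - 2 * (u i * v i) + v i ^ 2 from by ring,
      Finset.sum_add_distrib, Finset.sum_sub_distrib, ← Finset.mul_sum]
  have key : c * ∑ i, (u i - v i) ^ 2
      ≤ (Real.sqrt (c * ∑ i, u i ^ 2) + Real.sqrt (c * ∑ i, v i ^ 2)) ^ 2 := by
    have e1 : Real.sqrt (c * ∑ i, u i ^ 2) ^ 2 = c * ∑ i, u i ^ 2 := Real.sq_sqrt hU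
    have e2 : Real.sqrt (c * ∑ i, v i ^ 2) ^ 2 = c * ∑ i, v i ^ 2 := Real.sq_sqrt hV
    have e3 : Real.sqrt (c * ∑ i, u i ^ 2) * Real.sqrt (c * ∑ i, v i ^ 2)
        = c * (Real.sqrt (∑ i, u i ^ 2) * Real.sqrt (∑ i, v i ^ 2)) := by
      rw [Real.sqrt_mul hc, Real.sqrt_mul hc]
      have hcc : Real.sqrt c * Real.sqrt c = c := Real.mul_self_sqrt hc
      rw [show Real.sqrt c * Real.sqrt (∑ i, u i ^ 2) * (Real.sqrt c * Real.sqrt (∑ i, v i ^ 2))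
        = (Real.sqrt c * Real.sqrt c) * (Real.sqrt (∑ i, u i ^ 2) * Real.sqrt (∑ i, v i ^ 2))
        from by ring, hcc]
    have habs : -(∑ i, u i * v i) ≤ Real.sqrt (∑ i, u i ^ 2) * Real.sqrt (∑ i, v i ^ 2) :=
      (neg_le_abs _).trans hP
    have := mul_le_mul_of_nonneg_left habs hc
    nlinarith [this]
  calc Real.sqrt (c * ∑ i, (u i - v i) ^ 2)
      ≤ Real.sqrt ((Real.sqrt (c * ∑ i, u i ^ 2) + Real.sqrt (c * ∑ i, v i ^ 2)) ^ 2) :=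
        Real.sqrt_le_sqrt key
    _ = _ := Real.sqrt_sq (add_nonneg (Real.sqrt_nonneg _) (Real.sqrt_nonneg _))

private lemma my_mono (n : ℕ) (c : ℝ) (hc : 0 ≤ c) {f h : Fin n → ℝ}
    (hfh : ∀ i, f i ≤ h i) :
    Real.sqrt (c * ∑ i, f i) ≤ Real.sqrt (c * ∑ i, h i) :=
  Real.sqrt_le_sqrt (mul_le_mul_of_nonneg_left (Finset.sum_le_sum fun i _ => hfh i) hc)

/-- **L^∞ bound on L² kernel error (finite sample).**
Let `k : ℝ^d × ℝ^d → ℝ` be a bounded function, `x₀, x₀'` points, `g` a function,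
`x₁,…,xₙ` points, `A` a set, and `r ≥ 0`, `a, b ≥ 0` with `a + b = 1`. Then
`|(1/n) Σᵢ g(xᵢ)(k(xᵢ,x₀) − k(xᵢ,x₀')) 1_A(xᵢ)|` is bounded by
`‖g‖_{A,L²(Pₙ)} · [‖k(·,x₀)−k(·,x₀')‖_{A,∞} · Mass_A(r)^{1/2} + 2 tail_{k,A}(a r)
    + 2 ‖k‖_{A,L^{2,∞}} · 1{‖x₀−x₀'‖ ≥ b r}]`. -/
theorem linf_L2_kernel_error
    (d n : ℕ) (hn : 0 < n)
    (k : EuclideanSpace ℝ (Fin d) × EuclideanSpace ℝ (Fin d) → ℝ)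
    (hk : ∃ M : ℝ, ∀ p, |k p| ≤ M)
    (x₀ x₀' : EuclideanSpace ℝ (Fin d))
    (g : EuclideanSpace ℝ (Fin d) → ℝ)
    (x : Fin n → EuclideanSpace ℝ (Fin d))
    (A : Set (EuclideanSpace ℝ (Fin d)))
    (r a b : ℝ) (hr : 0 ≤ r) (ha : 0 ≤ a) (hb : 0 ≤ b) (hab : a + b = 1) :
    |(1 / n : ℝ) * ∑ i, g (x i) * (k (x i, x₀) - k (x i, x₀')) *
        (if x i ∈ A then (1 : ℝ) else 0)|
      ≤ Real.sqrt ((1 / n : ℝ) * ∑ i, (g (x i)) ^ 2 * (if x i ∈ A then (1 : ℝ) else 0)) *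
        ((⨆ i : Fin n, |(k (x i, x₀) - k (x i, x₀')) * (if x i ∈ A then (1 : ℝ) else 0)|) *
            Real.sqrt ((1 / n : ℝ) *
              ∑ i, (if ‖x i - x₀'‖ ≤ r ∧ x i ∈ A then (1 : ℝ) else 0))
          + 2 * max
              (Real.sqrt ((1 / n : ℝ) * ∑ i, (k (x i, x₀)) ^ 2 *
                (if a * r ≤ ‖x i - x₀‖ ∧ x i ∈ A then (1 : ℝ) else 0)))
              (Real.sqrt ((1 / n : ℝ) * ∑ i, (k (x i, x₀')) ^ 2 *
                (if a * r ≤ ‖x i - x₀'‖ ∧ x i ∈ A then (1 : ℝ) else 0)))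
          + 2 * max
              (Real.sqrt ((1 / n : ℝ) * ∑ i, (k (x i, x₀)) ^ 2 *
                (if x i ∈ A then (1 : ℝ) else 0)))
              (Real.sqrt ((1 / n : ℝ) * ∑ i, (k (x i, x₀')) ^ 2 *
                (if x i ∈ A then (1 : ℝ) else 0)))
            * (if b * r ≤ ‖x₀ - x₀'‖ then (1 : ℝ) else 0)) := by
  have hc : (0:ℝ) ≤ 1 / n := by positivity
  have hind : ∀ (P : Prop) (inst : Decidable P), (0:ℝ) ≤ (@ite ℝ P inst 1 0) :=
    fun P inst => by split <;> norm_num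
  -- abbreviations as nonnegativity facts
  have hG : (0:ℝ) ≤ Real.sqrt ((1 / n : ℝ) *
      ∑ i, (g (x i)) ^ 2 * (if x i ∈ A then (1 : ℝ) else 0)) := Real.sqrt_nonneg _
  have hbdd : BddAbove (Set.range fun i : Fin n =>
      |(k (x i, x₀) - k (x i, x₀')) * (if x i ∈ A then (1 : ℝ) else 0)|) :=
    Set.Finite.bddAbove (Set.finite_range _)
  have hT1i : ∀ i : Fin n, |(k (x i, x₀) - k (x i, x₀')) * (if x i ∈ A then (1 : ℝ) else 0)|
      ≤ ⨆ i : Fin n, |(k (x i, x₀) - k (x i, x₀')) * (if x i ∈ A then (1 : ℝ) else 0)| :=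
    fun i => le_ciSup hbdd i
  have hT1 : (0:ℝ) ≤ ⨆ i : Fin n,
      |(k (x i, x₀) - k (x i, x₀')) * (if x i ∈ A then (1 : ℝ) else 0)| :=
    le_trans (abs_nonneg _) (hT1i ⟨0, hn⟩)
  -- the squared-weight identity for g
  have egw : (∑ i, (g (x i) * (if x i ∈ A then (1 : ℝ) else 0)) ^ 2)
      = ∑ i, (g (x i)) ^ 2 * (if x i ∈ A then (1 : ℝ) else 0) :=
    Finset.sum_congr rfl fun i _ => by by_cases h : x i ∈ A <;> simp [h]
  by_cases hcase : b * r ≤ ‖x₀ - x₀'‖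
  · -- near case: use triangle inequality in L²
    rw [if_pos hcase]
    have e1 : ∀ i : Fin n, g (x i) * (k (x i, x₀) - k (x i, x₀')) *
          (if x i ∈ A then (1 : ℝ) else 0)
        = (g (x i) * (if x i ∈ A then (1 : ℝ) else 0)) *
          ((k (x i, x₀) - k (x i, x₀')) * (if x i ∈ A then (1 : ℝ) else 0)) := by
      intro i; by_cases h : x i ∈ A <;> simp [h]
    have step1 : |(1 / n : ℝ) * ∑ i, g (x i) * (k (x i, x₀) - k (x i, x₀')) *
          (if x i ∈ A then (1 : ℝ) else 0)|
        ≤ Real.sqrt ((1 / n : ℝ) *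
            ∑ i, (g (x i) * (if x i ∈ A then (1 : ℝ) else 0)) ^ 2) *
          Real.sqrt ((1 / n : ℝ) *
            ∑ i, ((k (x i, x₀) - k (x i, x₀')) * (if x i ∈ A then (1 : ℝ) else 0)) ^ 2) := by
      rw [Finset.sum_congr rfl fun i _ => e1 i]
      exact my_cs n (1 / n) hc _ _
    rw [egw] at step1
    have eΔ : (∑ i, ((k (x i, x₀) - k (x i, x₀')) * (if x i ∈ A then (1 : ℝ) else 0)) ^ 2)
        = ∑ i, ((k (x i, x₀) * (if x i ∈ A then (1 : ℝ) else 0))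
            - (k (x i, x₀') * (if x i ∈ A then (1 : ℝ) else 0))) ^ 2 :=
      Finset.sum_congr rfl fun i _ => by ring
    rw [eΔ] at step1
    have etri := my_tri n (1 / n) hc
      (fun i => k (x i, x₀) * (if x i ∈ A then (1 : ℝ) else 0))
      (fun i => k (x i, x₀') * (if x i ∈ A then (1 : ℝ) else 0))
    have e0 : (∑ i, (k (x i, x₀) * (if x i ∈ A then (1 : ℝ) else 0)) ^ 2)
        = ∑ i, (k (x i, x₀)) ^ 2 * (if x i ∈ A then (1 : ℝ) else 0) :=
      Finset.sum_congr rfl fun i _ => by by_cases h : x i ∈ A <;> simp [h]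
    have e0' : (∑ i, (k (x i, x₀') * (if x i ∈ A then (1 : ℝ) else 0)) ^ 2)
        = ∑ i, (k (x i, x₀')) ^ 2 * (if x i ∈ A then (1 : ℝ) else 0) :=
      Finset.sum_congr rfl fun i _ => by by_cases h : x i ∈ A <;> simp [h]
    rw [e0, e0'] at etri
    have hmax : Real.sqrt ((1 / n : ℝ) *
          ∑ i, (k (x i, x₀)) ^ 2 * (if x i ∈ A then (1 : ℝ) else 0))
        + Real.sqrt ((1 / n : ℝ) *
          ∑ i, (k (x i, x₀')) ^ 2 * (if x i ∈ A then (1 : ℝ) else 0))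
        ≤ 2 * max
            (Real.sqrt ((1 / n : ℝ) * ∑ i, (k (x i, x₀)) ^ 2 *
              (if x i ∈ A then (1 : ℝ) else 0)))
            (Real.sqrt ((1 / n : ℝ) * ∑ i, (k (x i, x₀')) ^ 2 *
              (if x i ∈ A then (1 : ℝ) else 0))) := by
      have h1 := le_max_left
        (Real.sqrt ((1 / n : ℝ) * ∑ i, (k (x i, x₀)) ^ 2 *
          (if x i ∈ A then (1 : ℝ) else 0)))
        (Real.sqrt ((1 / n : ℝ) * ∑ i, (k (x i, x₀')) ^ 2 *
          (if x i ∈ A then (1 : ℝ) else 0)))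
      have h2 := le_max_right
        (Real.sqrt ((1 / n : ℝ) * ∑ i, (k (x i, x₀)) ^ 2 *
          (if x i ∈ A then (1 : ℝ) else 0)))
        (Real.sqrt ((1 / n : ℝ) * ∑ i, (k (x i, x₀')) ^ 2 *
          (if x i ∈ A then (1 : ℝ) else 0)))
      linarith
    have key : |(1 / n : ℝ) * ∑ i, g (x i) * (k (x i, x₀) - k (x i, x₀')) *
          (if x i ∈ A then (1 : ℝ) else 0)|
        ≤ Real.sqrt ((1 / n : ℝ) *
            ∑ i, (g (x i)) ^ 2 * (if x i ∈ A then (1 : ℝ) else 0)) *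
          (2 * max
            (Real.sqrt ((1 / n : ℝ) * ∑ i, (k (x i, x₀)) ^ 2 *
              (if x i ∈ A then (1 : ℝ) else 0)))
            (Real.sqrt ((1 / n : ℝ) * ∑ i, (k (x i, x₀')) ^ 2 *
              (if x i ∈ A then (1 : ℝ) else 0)))) :=
      step1.trans (mul_le_mul_of_nonneg_left (etri.trans hmax) hG)
    refine key.trans (mul_le_mul_of_nonneg_left ?_ hG)
    have hm1 : (0:ℝ) ≤ (⨆ i : Fin n,
        |(k (x i, x₀) - k (x i, x₀')) * (if x i ∈ A then (1 : ℝ) else 0)|) *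
        Real.sqrt ((1 / n : ℝ) *
          ∑ i, (if ‖x i - x₀'‖ ≤ r ∧ x i ∈ A then (1 : ℝ) else 0)) :=
      mul_nonneg hT1 (Real.sqrt_nonneg _)
    have hm2 : (0:ℝ) ≤ max
        (Real.sqrt ((1 / n : ℝ) * ∑ i, (k (x i, x₀)) ^ 2 *
          (if a * r ≤ ‖x i - x₀‖ ∧ x i ∈ A then (1 : ℝ) else 0)))
        (Real.sqrt ((1 / n : ℝ) * ∑ i, (k (x i, x₀')) ^ 2 *
          (if a * r ≤ ‖x i - x₀'‖ ∧ x i ∈ A then (1 : ℝ) else 0))) :=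
      le_trans (Real.sqrt_nonneg _) (le_max_left _ _)
    nlinarith
  · -- far case
    rw [if_neg hcase, mul_zero, add_zero]
    push_neg at hcase
    -- pointwise decomposition
    have hpt : ∀ i : Fin n, g (x i) * (k (x i, x₀) - k (x i, x₀')) *
          (if x i ∈ A then (1 : ℝ) else 0)
        = (g (x i) * (if x i ∈ A then (1 : ℝ) else 0)) *
            ((k (x i, x₀) - k (x i, x₀')) * (if x i ∈ A then (1 : ℝ) else 0) *
              (if ‖x i - x₀'‖ ≤ r then (1 : ℝ) else 0))
          + ((g (x i) * (if x i ∈ A then (1 : ℝ) else 0)) *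
              (k (x i, x₀) * (if x i ∈ A then (1 : ℝ) else 0) *
                (1 - (if ‖x i - x₀'‖ ≤ r then (1 : ℝ) else 0)))
            - (g (x i) * (if x i ∈ A then (1 : ℝ) else 0)) *
              (k (x i, x₀') * (if x i ∈ A then (1 : ℝ) else 0) *
                (1 - (if ‖x i - x₀'‖ ≤ r then (1 : ℝ) else 0)))) := by
      intro i
      by_cases hA : x i ∈ A <;> by_cases hs : ‖x i - x₀'‖ ≤ r <;> simp [hA, hs] <;> ring
    have hsplit : (1 / n : ℝ) * ∑ i, g (x i) * (k (x i, x₀) - k (x i, x₀')) *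
          (if x i ∈ A then (1 : ℝ) else 0)
        = (1 / n : ℝ) * ∑ i, (g (x i) * (if x i ∈ A then (1 : ℝ) else 0)) *
            ((k (x i, x₀) - k (x i, x₀')) * (if x i ∈ A then (1 : ℝ) else 0) *
              (if ‖x i - x₀'‖ ≤ r then (1 : ℝ) else 0))
          + ((1 / n : ℝ) * ∑ i, (g (x i) * (if x i ∈ A then (1 : ℝ) else 0)) *
              (k (x i, x₀) * (if x i ∈ A then (1 : ℝ) else 0) *
                (1 - (if ‖x i - x₀'‖ ≤ r then (1 : ℝ) else 0)))
            - (1 / n : ℝ) * ∑ i, (g (x i) * (if x i ∈ A then (1 : ℝ) else 0)) *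
              (k (x i, x₀') * (if x i ∈ A then (1 : ℝ) else 0) *
                (1 - (if ‖x i - x₀'‖ ≤ r then (1 : ℝ) else 0)))) := by
      rw [Finset.sum_congr rfl fun i _ => hpt i, Finset.sum_add_distrib,
        Finset.sum_sub_distrib]
      ring
    -- bound for term A
    have bA : |(1 / n : ℝ) * ∑ i, (g (x i) * (if x i ∈ A then (1 : ℝ) else 0)) *
          ((k (x i, x₀) - k (x i, x₀')) * (if x i ∈ A then (1 : ℝ) else 0) *
            (if ‖x i - x₀'‖ ≤ r then (1 : ℝ) else 0))|
        ≤ Real.sqrt ((1 / n : ℝ) *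
            ∑ i, (g (x i)) ^ 2 * (if x i ∈ A then (1 : ℝ) else 0)) *
          ((⨆ i : Fin n, |(k (x i, x₀) - k (x i, x₀')) *
              (if x i ∈ A then (1 : ℝ) else 0)|) *
            Real.sqrt ((1 / n : ℝ) *
              ∑ i, (if ‖x i - x₀'‖ ≤ r ∧ x i ∈ A then (1 : ℝ) else 0))) := by
      refine (my_cs n (1 / n) hc _ _).trans ?_
      rw [egw]
      refine mul_le_mul_of_nonneg_left ?_ hG
      have hpt2 : ∀ i : Fin n, ((k (x i, x₀) - k (x i, x₀')) *
            (if x i ∈ A then (1 : ℝ) else 0) *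
            (if ‖x i - x₀'‖ ≤ r then (1 : ℝ) else 0)) ^ 2
          ≤ (⨆ i : Fin n, |(k (x i, x₀) - k (x i, x₀')) *
              (if x i ∈ A then (1 : ℝ) else 0)|) ^ 2 *
            (if ‖x i - x₀'‖ ≤ r ∧ x i ∈ A then (1 : ℝ) else 0) := by
        intro i
        by_cases hA : x i ∈ A
        · by_cases hs : ‖x i - x₀'‖ ≤ r
          · rw [if_pos hA, if_pos hs,
              if_pos (show ‖x i - x₀'‖ ≤ r ∧ x i ∈ A from ⟨hs, hA⟩)]
            have h := hT1i i
            rw [if_pos hA, mul_one] at h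
            nlinarith [abs_nonneg (k (x i, x₀) - k (x i, x₀')),
              sq_abs (k (x i, x₀) - k (x i, x₀'))]
          · rw [if_pos hA, if_neg hs, mul_zero, zero_pow two_ne_zero]
            exact mul_nonneg (sq_nonneg _) (hind _ _)
        · rw [if_neg hA, mul_zero, zero_mul, zero_pow two_ne_zero]
          exact mul_nonneg (sq_nonneg _) (hind _ _)
      refine (my_mono n (1 / n) hc hpt2).trans ?_
      have efac : (1 / n : ℝ) * ∑ i, (⨆ i : Fin n, |(k (x i, x₀) - k (x i, x₀')) *
              (if x i ∈ A then (1 : ℝ) else 0)|) ^ 2 *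
            (if ‖x i - x₀'‖ ≤ r ∧ x i ∈ A then (1 : ℝ) else 0)
          = (⨆ i : Fin n, |(k (x i, x₀) - k (x i, x₀')) *
              (if x i ∈ A then (1 : ℝ) else 0)|) ^ 2 *
            ((1 / n : ℝ) * ∑ i, (if ‖x i - x₀'‖ ≤ r ∧ x i ∈ A then (1 : ℝ) else 0)) := by
        rw [← Finset.mul_sum]; ring
      rw [efac, Real.sqrt_mul (sq_nonneg _), Real.sqrt_sq hT1]
    -- bound for term B
    have bB : |(1 / n : ℝ) * ∑ i, (g (x i) * (if x i ∈ A then (1 : ℝ) else 0)) *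
          (k (x i, x₀) * (if x i ∈ A then (1 : ℝ) else 0) *
            (1 - (if ‖x i - x₀'‖ ≤ r then (1 : ℝ) else 0)))|
        ≤ Real.sqrt ((1 / n : ℝ) *
            ∑ i, (g (x i)) ^ 2 * (if x i ∈ A then (1 : ℝ) else 0)) *
          Real.sqrt ((1 / n : ℝ) * ∑ i, (k (x i, x₀)) ^ 2 *
            (if a * r ≤ ‖x i - x₀‖ ∧ x i ∈ A then (1 : ℝ) else 0)) := by
      refine (my_cs n (1 / n) hc _ _).trans ?_
      rw [egw]
      refine mul_le_mul_of_nonneg_left ?_ hG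
      refine my_mono n (1 / n) hc ?_
      intro i
      by_cases hA : x i ∈ A
      · by_cases hs : ‖x i - x₀'‖ ≤ r
        · rw [if_pos hA, if_pos hs, sub_self, mul_zero, zero_pow two_ne_zero]
          exact mul_nonneg (sq_nonneg _) (hind _ _)
        · have htri : ‖x i - x₀'‖ ≤ ‖x i - x₀‖ + ‖x₀ - x₀'‖ := by
            calc ‖x i - x₀'‖ = ‖(x i - x₀) + (x₀ - x₀')‖ := by rw [sub_add_sub_cancel]
              _ ≤ _ := norm_add_le _ _
          have habr : a * r + b * r = r := by rw [← add_mul, hab, one_mul]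
          have hs' : r < ‖x i - x₀'‖ := lt_of_not_ge hs
          have hcond : a * r ≤ ‖x i - x₀‖ := by linarith
          rw [if_pos hA, if_neg hs,
            if_pos (show a * r ≤ ‖x i - x₀‖ ∧ x i ∈ A from ⟨hcond, hA⟩)]
          exact le_of_eq (by ring)
      · rw [if_neg hA, mul_zero, zero_mul, zero_pow two_ne_zero]
        exact mul_nonneg (sq_nonneg _) (hind _ _)
    -- bound for term C
    have bC : |(1 / n : ℝ) * ∑ i, (g (x i) * (if x i ∈ A then (1 : ℝ) else 0)) *
          (k (x i, x₀') * (if x i ∈ A then (1 : ℝ) else 0) *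
            (1 - (if ‖x i - x₀'‖ ≤ r then (1 : ℝ) else 0)))|
        ≤ Real.sqrt ((1 / n : ℝ) *
            ∑ i, (g (x i)) ^ 2 * (if x i ∈ A then (1 : ℝ) else 0)) *
          Real.sqrt ((1 / n : ℝ) * ∑ i, (k (x i, x₀')) ^ 2 *
            (if a * r ≤ ‖x i - x₀'‖ ∧ x i ∈ A then (1 : ℝ) else 0)) := by
      refine (my_cs n (1 / n) hc _ _).trans ?_
      rw [egw]
      refine mul_le_mul_of_nonneg_left ?_ hG
      refine my_mono n (1 / n) hc ?_
      intro i
      by_cases hA : x i ∈ A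
      · by_cases hs : ‖x i - x₀'‖ ≤ r
        · rw [if_pos hA, if_pos hs, sub_self, mul_zero, zero_pow two_ne_zero]
          exact mul_nonneg (sq_nonneg _) (hind _ _)
        · have habr : a * r + b * r = r := by rw [← add_mul, hab, one_mul]
          have hs' : r < ‖x i - x₀'‖ := lt_of_not_ge hs
          have hcond : a * r ≤ ‖x i - x₀'‖ := by nlinarith
          rw [if_pos hA, if_neg hs,
            if_pos (show a * r ≤ ‖x i - x₀'‖ ∧ x i ∈ A from ⟨hcond, hA⟩)]
          exact le_of_eq (by ring)
      · rw [if_neg hA, mul_zero, zero_mul, zero_pow two_ne_zero]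
        exact mul_nonneg (sq_nonneg _) (hind _ _)
    -- combine
    have hbr1 : Real.sqrt ((1 / n : ℝ) * ∑ i, (k (x i, x₀)) ^ 2 *
          (if a * r ≤ ‖x i - x₀‖ ∧ x i ∈ A then (1 : ℝ) else 0))
        ≤ max (Real.sqrt ((1 / n : ℝ) * ∑ i, (k (x i, x₀)) ^ 2 *
            (if a * r ≤ ‖x i - x₀‖ ∧ x i ∈ A then (1 : ℝ) else 0)))
          (Real.sqrt ((1 / n : ℝ) * ∑ i, (k (x i, x₀')) ^ 2 *
            (if a * r ≤ ‖x i - x₀'‖ ∧ x i ∈ A then (1 : ℝ) else 0))) := le_max_left _ _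
    have hbr2 : Real.sqrt ((1 / n : ℝ) * ∑ i, (k (x i, x₀')) ^ 2 *
          (if a * r ≤ ‖x i - x₀'‖ ∧ x i ∈ A then (1 : ℝ) else 0))
        ≤ max (Real.sqrt ((1 / n : ℝ) * ∑ i, (k (x i, x₀)) ^ 2 *
            (if a * r ≤ ‖x i - x₀‖ ∧ x i ∈ A then (1 : ℝ) else 0)))
          (Real.sqrt ((1 / n : ℝ) * ∑ i, (k (x i, x₀')) ^ 2 *
            (if a * r ≤ ‖x i - x₀'‖ ∧ x i ∈ A then (1 : ℝ) else 0))) := le_max_right _ _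
    rw [hsplit]
    have habs := abs_add_le
      ((1 / n : ℝ) * ∑ i, (g (x i) * (if x i ∈ A then (1 : ℝ) else 0)) *
        ((k (x i, x₀) - k (x i, x₀')) * (if x i ∈ A then (1 : ℝ) else 0) *
          (if ‖x i - x₀'‖ ≤ r then (1 : ℝ) else 0)))
      (((1 / n : ℝ) * ∑ i, (g (x i) * (if x i ∈ A then (1 : ℝ) else 0)) *
          (k (x i, x₀) * (if x i ∈ A then (1 : ℝ) else 0) *
            (1 - (if ‖x i - x₀'‖ ≤ r then (1 : ℝ) else 0))))
        - ((1 / n : ℝ) * ∑ i, (g (x i) * (if x i ∈ A then (1 : ℝ) else 0)) *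
          (k (x i, x₀') * (if x i ∈ A then (1 : ℝ) else 0) *
            (1 - (if ‖x i - x₀'‖ ≤ r then (1 : ℝ) else 0)))))
    have habs2 := abs_sub
      ((1 / n : ℝ) * ∑ i, (g (x i) * (if x i ∈ A then (1 : ℝ) else 0)) *
        (k (x i, x₀) * (if x i ∈ A then (1 : ℝ) else 0) *
          (1 - (if ‖x i - x₀'‖ ≤ r then (1 : ℝ) else 0))))
      ((1 / n : ℝ) * ∑ i, (g (x i) * (if x i ∈ A then (1 : ℝ) else 0)) *
        (k (x i, x₀') * (if x i ∈ A then (1 : ℝ) else 0) *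
          (1 - (if ‖x i - x₀'‖ ≤ r then (1 : ℝ) else 0))))
    have m1 := mul_le_mul_of_nonneg_left hbr1 hG
    have m2 := mul_le_mul_of_nonneg_left hbr2 hG
    have hexp : Real.sqrt ((1 / n : ℝ) *
          ∑ i, (g (x i)) ^ 2 * (if x i ∈ A then (1 : ℝ) else 0)) *
        ((⨆ i : Fin n, |(k (x i, x₀) - k (x i, x₀')) *
            (if x i ∈ A then (1 : ℝ) else 0)|) *
          Real.sqrt ((1 / n : ℝ) *
            ∑ i, (if ‖x i - x₀'‖ ≤ r ∧ x i ∈ A then (1 : ℝ) else 0))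
          + 2 * max
              (Real.sqrt ((1 / n : ℝ) * ∑ i, (k (x i, x₀)) ^ 2 *
                (if a * r ≤ ‖x i - x₀‖ ∧ x i ∈ A then (1 : ℝ) else 0)))
              (Real.sqrt ((1 / n : ℝ) * ∑ i, (k (x i, x₀')) ^ 2 *
                (if a * r ≤ ‖x i - x₀'‖ ∧ x i ∈ A then (1 : ℝ) else 0))))
        = Real.sqrt ((1 / n : ℝ) *
            ∑ i, (g (x i)) ^ 2 * (if x i ∈ A then (1 : ℝ) else 0)) *
          ((⨆ i : Fin n, |(k (x i, x₀) - k (x i, x₀')) *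
              (if x i ∈ A then (1 : ℝ) else 0)|) *
            Real.sqrt ((1 / n : ℝ) *
              ∑ i, (if ‖x i - x₀'‖ ≤ r ∧ x i ∈ A then (1 : ℝ) else 0)))
          + Real.sqrt ((1 / n : ℝ) *
              ∑ i, (g (x i)) ^ 2 * (if x i ∈ A then (1 : ℝ) else 0)) *
            max
              (Real.sqrt ((1 / n : ℝ) * ∑ i, (k (x i, x₀)) ^ 2 *
                (if a * r ≤ ‖x i - x₀‖ ∧ x i ∈ A then (1 : ℝ) else 0)))
              (Real.sqrt ((1 / n : ℝ) * ∑ i, (k (x i, x₀')) ^ 2 *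
                (if a * r ≤ ‖x i - x₀'‖ ∧ x i ∈ A then (1 : ℝ) else 0)))
          + Real.sqrt ((1 / n : ℝ) *
              ∑ i, (g (x i)) ^ 2 * (if x i ∈ A then (1 : ℝ) else 0)) *
            max
              (Real.sqrt ((1 / n : ℝ) * ∑ i, (k (x i, x₀)) ^ 2 *
                (if a * r ≤ ‖x i - x₀‖ ∧ x i ∈ A then (1 : ℝ) else 0)))
              (Real.sqrt ((1 / n : ℝ) * ∑ i, (k (x i, x₀')) ^ 2 *
                (if a * r ≤ ‖x i - x₀'‖ ∧ x i ∈ A then (1 : ℝ) else 0))) := by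
      ring
    linarith [bA, bB, bC, habs, habs2, m1, m2]
end

section
/- Let h > 0 and ε ∈ (0, h/2]. Let κ : [0,∞) → [0,1] be nonincreasing and define k(x,z) = κ(‖x−z‖/h) on ℝ^d. Let j ≥ 1 be an integer and let x₁,…,xₙ, x₀, x₀′ ∈ ℝ^d with ‖x₀ − x₀′‖ ≤ ε. Then (1/n) Σᵢ k(xᵢ, x₀) 1{2^{j−1}h < ‖xᵢ − x₀‖ ≤ 2^j h} ≤ (1/n) Σᵢ k(xᵢ, x₀′) 1{2^{j−1}h − ε < ‖xᵢ − x₀′‖ ≤ 2^j h + ε} + κ((2^{j−1}h − 2ε)/h) · (1/n) Σᵢ 1{2^{j−1}h − ε < ‖xᵢ − x₀′‖ ≤ 2^j h + ε}. -/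
open scoped BigOperators
open scoped Classical

/-- **Transfer of the empirical kernel annulus mean to a nearby center (annulus case).**
For a shift-invariant kernel `k(x,z) = κ(‖x−z‖/h)` with nonincreasing profile `κ`
taking values in `[0,1]`, an integer `j ≥ 1`, and centers `x₀, x₀'` with
`‖x₀ − x₀'‖ ≤ ε` where `ε ∈ (0, h/2]`:
`(1/n) Σᵢ k(xᵢ,x₀) 1{2^{j−1}h < ‖xᵢ−x₀‖ ≤ 2^j h}
  ≤ (1/n) Σᵢ k(xᵢ,x₀') 1{2^{j−1}h−ε < ‖xᵢ−x₀'‖ ≤ 2^j h+ε}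
    + κ((2^{j−1}h − 2ε)/h) (1/n) Σᵢ 1{2^{j−1}h−ε < ‖xᵢ−x₀'‖ ≤ 2^j h+ε}`. -/
theorem kernel_empirical_mean_annulus_transfer
    (d n : ℕ) (h ε : ℝ) (hh : 0 < h) (hε0 : 0 < ε) (hεh : ε ≤ h / 2)
    (κ : ℝ → ℝ) (hκ : ∀ u : ℝ, 0 ≤ u → 0 ≤ κ u ∧ κ u ≤ 1)
    (hmono : ∀ u v : ℝ, 0 ≤ u → u ≤ v → κ v ≤ κ u)
    (j : ℕ) (hj : 1 ≤ j)
    (x₀ x₀' : EuclideanSpace ℝ (Fin d)) (x : Fin n → EuclideanSpace ℝ (Fin d))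
    (hdist : ‖x₀ - x₀'‖ ≤ ε) :
    (1 / n : ℝ) * ∑ i, κ (‖x i - x₀‖ / h) *
        (if (2 : ℝ) ^ (j - 1) * h < ‖x i - x₀‖ ∧ ‖x i - x₀‖ ≤ (2 : ℝ) ^ j * h
          then (1 : ℝ) else 0)
      ≤ (1 / n : ℝ) * ∑ i, κ (‖x i - x₀'‖ / h) *
          (if (2 : ℝ) ^ (j - 1) * h - ε < ‖x i - x₀'‖ ∧ ‖x i - x₀'‖ ≤ (2 : ℝ) ^ j * h + ε
            then (1 : ℝ) else 0)
        + κ (((2 : ℝ) ^ (j - 1) * h - 2 * ε) / h) *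
          ((1 / n : ℝ) * ∑ i,
            (if (2 : ℝ) ^ (j - 1) * h - ε < ‖x i - x₀'‖ ∧ ‖x i - x₀'‖ ≤ (2 : ℝ) ^ j * h + ε
              then (1 : ℝ) else 0)) := by
  have hpow1 : (1 : ℝ) ≤ (2 : ℝ) ^ (j - 1) := one_le_pow₀ (by norm_num)
  have hstar0 : 0 ≤ (2 : ℝ) ^ (j - 1) * h - 2 * ε := by
    have : h ≤ (2 : ℝ) ^ (j - 1) * h := le_mul_of_one_le_left hh.le hpow1
    linarith
  have key : ∀ i : Fin n,
      κ (‖x i - x₀‖ / h) *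
        (if (2 : ℝ) ^ (j - 1) * h < ‖x i - x₀‖ ∧ ‖x i - x₀‖ ≤ (2 : ℝ) ^ j * h
          then (1 : ℝ) else 0)
      ≤ κ (‖x i - x₀'‖ / h) *
          (if (2 : ℝ) ^ (j - 1) * h - ε < ‖x i - x₀'‖ ∧ ‖x i - x₀'‖ ≤ (2 : ℝ) ^ j * h + ε
            then (1 : ℝ) else 0)
        + κ (((2 : ℝ) ^ (j - 1) * h - 2 * ε) / h) *
          (if (2 : ℝ) ^ (j - 1) * h - ε < ‖x i - x₀'‖ ∧ ‖x i - x₀'‖ ≤ (2 : ℝ) ^ j * h + ε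
            then (1 : ℝ) else 0) := by
    intro i
    by_cases hi : (2 : ℝ) ^ (j - 1) * h < ‖x i - x₀‖ ∧ ‖x i - x₀‖ ≤ (2 : ℝ) ^ j * h
    · have htri : |‖x i - x₀'‖ - ‖x i - x₀‖| ≤ ε := by
        have := abs_norm_sub_norm_le (x i - x₀') (x i - x₀)
        have heq : (x i - x₀') - (x i - x₀) = x₀ - x₀' := by abel
        rw [heq] at this
        exact this.trans hdist
      rw [abs_le] at htri
      have hi' : (2 : ℝ) ^ (j - 1) * h - ε < ‖x i - x₀'‖ ∧
          ‖x i - x₀'‖ ≤ (2 : ℝ) ^ j * h + ε := by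
        constructor <;> [linarith [hi.1]; linarith [hi.2]]
      rw [if_pos hi, if_pos hi', mul_one, mul_one, mul_one]
      have h1 : 0 ≤ κ (‖x i - x₀'‖ / h) :=
        (hκ _ (div_nonneg (norm_nonneg _) hh.le)).1
      have h2 : κ (‖x i - x₀‖ / h) ≤ κ (((2 : ℝ) ^ (j - 1) * h - 2 * ε) / h) := by
        apply hmono _ _ (div_nonneg hstar0 hh.le)
        exact div_le_div_of_nonneg_right (by linarith [hi.1]) hh.le
      linarith
    · rw [if_neg hi, mul_zero]
      have h0 : (0:ℝ) ≤ (if (2 : ℝ) ^ (j - 1) * h - ε < ‖x i - x₀'‖ ∧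
          ‖x i - x₀'‖ ≤ (2 : ℝ) ^ j * h + ε then (1 : ℝ) else 0) := by positivity
      have h1 : 0 ≤ κ (‖x i - x₀'‖ / h) :=
        (hκ _ (div_nonneg (norm_nonneg _) hh.le)).1
      have h2 : 0 ≤ κ (((2 : ℝ) ^ (j - 1) * h - 2 * ε) / h) :=
        (hκ _ (div_nonneg hstar0 hh.le)).1
      positivity
  have hn : (0:ℝ) ≤ 1 / n := by positivity
  calc (1 / n : ℝ) * ∑ i, κ (‖x i - x₀‖ / h) *
        (if (2 : ℝ) ^ (j - 1) * h < ‖x i - x₀‖ ∧ ‖x i - x₀‖ ≤ (2 : ℝ) ^ j * h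
          then (1 : ℝ) else 0)
      ≤ (1 / n : ℝ) * ∑ i, (κ (‖x i - x₀'‖ / h) *
          (if (2 : ℝ) ^ (j - 1) * h - ε < ‖x i - x₀'‖ ∧ ‖x i - x₀'‖ ≤ (2 : ℝ) ^ j * h + ε
            then (1 : ℝ) else 0)
        + κ (((2 : ℝ) ^ (j - 1) * h - 2 * ε) / h) *
          (if (2 : ℝ) ^ (j - 1) * h - ε < ‖x i - x₀'‖ ∧ ‖x i - x₀'‖ ≤ (2 : ℝ) ^ j * h + ε
            then (1 : ℝ) else 0)) := by
        apply mul_le_mul_of_nonneg_left (Finset.sum_le_sum fun i _ => key i) hn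
    _ = _ := by
        rw [Finset.sum_add_distrib, mul_add, Finset.mul_sum, Finset.mul_sum,
          Finset.mul_sum, Finset.mul_sum]
        congr 1
        apply Finset.sum_congr rfl
        intro i _
        ring
end

section
/- Let α ∈ (0,2), L > 0, ε > 0, let n be a positive integer, and let μ₁, …, μₙ be nonnegative reals such that μ_j ≤ 4·(L/(j−1))^{2/α} for every integer j with L + 1 < j ≤ n. Then for every integer k with L + 1 < k ≤ n: Σ_{j=1}^n min(ε², μ_j) ≤ k·ε² + (4α/(2−α))·L^{2/α}·(k−1)^{1−2/α}. -/
open scoped BigOperators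

-- key step inequality via integral comparison
lemma key_step (a p : ℝ) (ha : 1 ≤ a) (hp : 1 < p) :
    (a + 1) ^ (-p) ≤ (a ^ (1 - p) - (a + 1) ^ (1 - p)) / (p - 1) := by
  have ha0 : (0:ℝ) < a := lt_of_lt_of_le one_pos ha
  have h01 : (0:ℝ) ∉ Set.uIcc a (a+1) := by
    rw [Set.uIcc_of_le (by linarith)]
    intro h
    exact absurd h.1 (by linarith)
  have hint : ∫ x in a..(a+1), x ^ (-p) =
      ((a+1) ^ (-p + 1) - a ^ (-p + 1)) / (-p + 1) :=
    integral_rpow (Or.inr ⟨by intro h; linarith [neg_eq_iff_eq_neg.mp h], h01⟩)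
  have hcontOn : ContinuousOn (fun x : ℝ => x ^ (-p)) (Set.uIcc a (a+1)) := by
    apply ContinuousOn.rpow_const continuousOn_id
    intro x hx
    exact Or.inl (fun h => h01 (h ▸ hx))
  have hmono : (a + 1) ^ (-p) ≤ ∫ x in a..(a+1), x ^ (-p) := by
    have := intervalIntegral.integral_mono_on (by linarith : a ≤ a + 1)
      (intervalIntegrable_const (c := (a+1) ^ (-p)) (μ := MeasureTheory.volume))
      (hcontOn.intervalIntegrable)
      (fun x hx => Real.rpow_le_rpow_of_nonpos (by linarith [hx.1]) hx.2 (by linarith))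
    simpa using this
  calc (a + 1) ^ (-p) ≤ ((a+1) ^ (-p + 1) - a ^ (-p + 1)) / (-p + 1) := hint ▸ hmono
    _ = (a ^ (1 - p) - (a + 1) ^ (1 - p)) / (p - 1) := by
        rw [show -p + 1 = 1 - p by ring]
        rw [div_eq_div_iff (by linarith) (by linarith)]
        ring

lemma tail_sum (p : ℝ) (hp : 1 < p) (k : ℕ) (hk : 2 ≤ k) :
    ∀ n, k ≤ n → ∑ j ∈ Finset.Icc (k+1) n, ((j:ℝ) - 1) ^ (-p)
      ≤ (((k:ℝ) - 1) ^ (1 - p) - ((n:ℝ) - 1) ^ (1 - p)) / (p - 1) := by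
  intro n hn
  induction n, hn using Nat.le_induction with
  | base => simp [Finset.Icc_eq_empty_of_lt (Nat.lt_succ_self k)]
  | succ n hn ih =>
    rw [Finset.sum_Icc_succ_top (by omega)]
    have hkey := key_step ((n:ℝ) - 1) p (by
      have : (2:ℝ) ≤ (n:ℝ) := by exact_mod_cast le_trans hk hn
      linarith) hp
    have hcast : ((n:ℝ) - 1) + 1 = ((n+1 : ℕ) : ℝ) - 1 := by push_cast; ring
    rw [hcast] at hkey
    have : (((k:ℝ) - 1) ^ (1 - p) - ((n:ℝ) - 1) ^ (1 - p)) / (p - 1)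
        + (((n:ℝ) - 1) ^ (1 - p) - (((n+1:ℕ):ℝ) - 1) ^ (1 - p)) / (p - 1)
        = (((k:ℝ) - 1) ^ (1 - p) - (((n+1:ℕ):ℝ) - 1) ^ (1 - p)) / (p - 1) := by
      field_simp
      ring
    linarith [ih]

/-- **Eigenvalue sum estimate for PolyGrowth kernels.**
Let `α ∈ (0,2)`, `L > 0`, `ε > 0`, and let `μ₁, …, μₙ` be nonnegative reals with
`μ_j ≤ 4 (L/(j−1))^{2/α}` for every `j` with `L + 1 < j ≤ n`. Then for every
integer `k` with `L + 1 < k ≤ n`,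
`Σ_{j=1}^n min(ε², μ_j) ≤ k ε² + (4α/(2−α)) L^{2/α} (k−1)^{1−2/α}`. -/
theorem polygrowth_eigenvalue_sum_bound
    (α L ε : ℝ) (hα0 : 0 < α) (hα2 : α < 2) (hL : 0 < L) (hε : 0 < ε)
    (n : ℕ) (hn : 0 < n) (μ : ℕ → ℝ)
    (hμ0 : ∀ j ∈ Finset.Icc 1 n, 0 ≤ μ j)
    (hμ : ∀ j : ℕ, L + 1 < (j : ℝ) → j ≤ n →
      μ j ≤ 4 * (L / ((j : ℝ) - 1)) ^ (2 / α)) :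
    ∀ k : ℕ, L + 1 < (k : ℝ) → k ≤ n →
      ∑ j ∈ Finset.Icc 1 n, min (ε ^ 2) (μ j)
        ≤ (k : ℝ) * ε ^ 2 + (4 * α / (2 - α)) * L ^ (2 / α) *
            ((k : ℝ) - 1) ^ (1 - 2 / α) := by
  intro k hk1 hkn
  set p : ℝ := 2 / α with hpdef
  have hp : 1 < p := (one_lt_div hα0).mpr hα2
  have hk2 : 2 ≤ k := by
    by_contra h
    push_neg at h
    interval_cases k <;> simp_all <;> linarith
  -- split the sum
  have hsplit : ∑ j ∈ Finset.Icc 1 n, min (ε ^ 2) (μ j)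
      = ∑ j ∈ Finset.Ioc 0 k, min (ε ^ 2) (μ j)
        + ∑ j ∈ Finset.Ioc k n, min (ε ^ 2) (μ j) := by
    have he : Finset.Icc 1 n = Finset.Ioc 0 n := by ext x; simp; omega
    rw [he]
    exact (Finset.sum_Ioc_consecutive _ (Nat.zero_le k) hkn).symm
  rw [hsplit]
  have h1 : ∑ j ∈ Finset.Ioc 0 k, min (ε ^ 2) (μ j) ≤ (k : ℝ) * ε ^ 2 := by
    have := Finset.sum_le_card_nsmul (Finset.Ioc 0 k) (fun j => min (ε ^ 2) (μ j))
      (ε ^ 2) (fun j _ => min_le_left _ _)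
    simpa [Nat.card_Ioc, nsmul_eq_mul] using this
  have h2 : ∑ j ∈ Finset.Ioc k n, min (ε ^ 2) (μ j)
      ≤ 4 * L ^ p * ∑ j ∈ Finset.Icc (k+1) n, ((j:ℝ) - 1) ^ (-p) := by
    rw [← Finset.Icc_add_one_left_eq_Ioc k n] at *
    rw [Finset.mul_sum]
    apply Finset.sum_le_sum
    intro j hj
    obtain ⟨hj1, hj2⟩ := Finset.mem_Icc.mp hj
    have hjR : L + 1 < (j : ℝ) := by
      have : (k:ℝ) ≤ (j:ℝ) := by exact_mod_cast le_trans (Nat.le_succ k) hj1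
      linarith
    have hjm1 : (0:ℝ) < (j:ℝ) - 1 := by linarith
    have := hμ j hjR hj2
    have heq : (L / ((j:ℝ) - 1)) ^ p = L ^ p * ((j:ℝ) - 1) ^ (-p) := by
      rw [Real.div_rpow hL.le hjm1.le, Real.rpow_neg hjm1.le, div_eq_mul_inv]
    calc min (ε ^ 2) (μ j) ≤ μ j := min_le_right _ _
      _ ≤ 4 * (L / ((j:ℝ) - 1)) ^ p := this
      _ = 4 * L ^ p * (((j:ℝ) - 1) ^ (-p)) := by rw [heq]; ring
  have h3 : ∑ j ∈ Finset.Icc (k+1) n, ((j:ℝ) - 1) ^ (-p)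
      ≤ (((k:ℝ) - 1) ^ (1 - p) - ((n:ℝ) - 1) ^ (1 - p)) / (p - 1) :=
    tail_sum p hp k hk2 n hkn
  have hnn : (0:ℝ) ≤ ((n:ℝ) - 1) ^ (1 - p) := Real.rpow_nonneg (by
    have : (2:ℝ) ≤ (n:ℝ) := by exact_mod_cast le_trans hk2 hkn
    linarith) _
  have hLp : (0:ℝ) ≤ L ^ p := Real.rpow_nonneg hL.le _
  have h4 : 4 * L ^ p * ((((k:ℝ) - 1) ^ (1 - p) - ((n:ℝ) - 1) ^ (1 - p)) / (p - 1))
      ≤ (4 * α / (2 - α)) * L ^ p * ((k : ℝ) - 1) ^ (1 - p) := by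
    have hpm : p - 1 = (2 - α) / α := by rw [hpdef]; field_simp
    have hcoef : 4 / (p - 1) = 4 * α / (2 - α) := by
      rw [hpm, div_div_eq_mul_div]
    have hp1 : (0:ℝ) < p - 1 := by linarith
    calc 4 * L ^ p * ((((k:ℝ) - 1) ^ (1 - p) - ((n:ℝ) - 1) ^ (1 - p)) / (p - 1))
        = (4 * L ^ p * (((k:ℝ) - 1) ^ (1 - p) - ((n:ℝ) - 1) ^ (1 - p))) / (p - 1) := by ring
      _ ≤ (4 * L ^ p * (((k:ℝ) - 1) ^ (1 - p))) / (p - 1) := by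
          gcongr
          nlinarith
      _ = (4 / (p - 1)) * L ^ p * ((k:ℝ) - 1) ^ (1 - p) := by ring
      _ = (4 * α / (2 - α)) * L ^ p * ((k:ℝ) - 1) ^ (1 - p) := by rw [hcoef]
  calc ∑ j ∈ Finset.Ioc 0 k, min (ε ^ 2) (μ j) + ∑ j ∈ Finset.Ioc k n, min (ε ^ 2) (μ j)
      ≤ (k : ℝ) * ε ^ 2 + 4 * L ^ p * ∑ j ∈ Finset.Icc (k+1) n, ((j:ℝ) - 1) ^ (-p) := by
        exact add_le_add h1 h2
    _ ≤ (k : ℝ) * ε ^ 2 + (4 * α / (2 - α)) * L ^ p * ((k : ℝ) - 1) ^ (1 - p) := by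
        have := mul_le_mul_of_nonneg_left h3 (by positivity : (0:ℝ) ≤ 4 * L ^ p)
        linarith [h4]
end
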